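/- arXiv:2108.13604 — 2 statements merged into one kernel-verified Lean document; each statement's English description precedes it below -/
import Mathlib

section
/- With ν = −(1/(2π)) log(1+|γ(k₀)|²) and δ(k) = ((k−k₀)/(k+k₀))^{iν} e^{𝒳(k)} as above, for all k ∈ ℂ \ [−k₀,k₀] one has δ(k)·δ*(k*) = 1, where δ*(k*) denotes the complex conjugate of δ evaluated at conj(k). In particular |δ(k)| ≤ C uniformly on ℂ. -/
/-!
Conjugation sends the Cauchy transform of a real density at `conj k` to minus its value at `k`,
and sends `(k - k₀)/(k + k₀)` to its value at `conj k`; off the cut this quotient lies in the slit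
plane, where the principal power `w ^ (iν)` commutes with conjugation up to `ν ↦ -ν`. Hence
`δ(k) · conj δ(conj k) = 1`. For the bound, `‖w ^ (iν)‖ ≤ exp (π |ν|)` for every `w`, and
`Re 𝒳(k)` is `1/2π` times the density integrated against the Poisson kernel at `k`, whose total
mass over any interval is at most `π`.
-/

open Complex ComplexConjugate

open Real in
theorem integral_poisson_kernel_le_pi (x y a b : ℝ) (hy : y ≠ 0) :
    ∫ ξ in a..b, |y| / ((ξ - x) ^ 2 + y ^ 2) ≤ π := by
  have hy' : |y| ≠ 0 := abs_ne_zero.mpr hy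
  have hkernel : ∀ ξ : ℝ, |y| / ((ξ - x) ^ 2 + y ^ 2) = (1 + ((ξ - x) / |y|) ^ 2)⁻¹ * |y|⁻¹ := by
    intro ξ
    field_simp
    rw [sq_abs]
    ring
  have hsubst : ∫ ξ in a..b, (1 + ((ξ - x) / |y|) ^ 2)⁻¹
      = |y| * (Real.arctan ((b - x) / |y|) - Real.arctan ((a - x) / |y|)) := by
    rw [intervalIntegral.integral_comp_sub_right (fun u => (1 + (u / |y|) ^ 2)⁻¹),
      intervalIntegral.integral_comp_div (fun v => (1 + v ^ 2)⁻¹) hy', integral_inv_one_add_sq,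
      smul_eq_mul]
  simp_rw [hkernel]
  rw [intervalIntegral.integral_mul_const, hsubst, mul_comm, ← mul_assoc, inv_mul_cancel₀ hy',
    one_mul]
  linarith [arctan_lt_pi_div_two ((b - x) / |y|), neg_pi_div_two_lt_arctan ((a - x) / |y|)]

theorem im_ofReal_div_sub (c ξ : ℝ) (k : ℂ) :
    ((c : ℂ) / (ξ - k)).im = c * k.im / ((ξ - k.re) ^ 2 + k.im ^ 2) := by
  rw [div_im, normSq_apply]
  simp only [sub_re, sub_im, ofReal_re, ofReal_im]
  ring

theorem abs_im_integral_div_sub_le {f : ℝ → ℝ} {a b M : ℝ} (hab : a ≤ b)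
    (hf : ContinuousOn f (Set.Icc a b)) (hM : ∀ ξ ∈ Set.Icc a b, |f ξ| ≤ M) (k : ℂ) :
    |(∫ ξ in a..b, (f ξ : ℂ) / (ξ - k)).im| ≤ M * Real.pi := by
  have hM0 : 0 ≤ M := (abs_nonneg _).trans (hM a ⟨le_rfl, hab⟩)
  by_cases hk : k.im = 0
  · have hreal : ∀ ξ : ℝ, (f ξ : ℂ) / (ξ - k) = ((f ξ / (ξ - k.re) : ℝ) : ℂ) := by
      intro ξ
      rw [← re_add_im k, hk]
      push_cast
      simp
    simp_rw [hreal, intervalIntegral.integral_ofReal, ofReal_im, abs_zero]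
    positivity
  have hden : ∀ ξ : ℝ, (ξ : ℂ) - k ≠ 0 := fun ξ h => hk (by simpa using congrArg im h.symm)
  have hint : IntervalIntegrable (fun ξ : ℝ => (f ξ : ℂ) / (ξ - k)) MeasureTheory.volume a b :=
    ContinuousOn.intervalIntegrable_of_Icc hab <|
      (continuous_ofReal.comp_continuousOn hf).div (by fun_prop) fun ξ _ => hden ξ
  have hkernel_cont : Continuous fun ξ : ℝ => |k.im| / ((ξ - k.re) ^ 2 + k.im ^ 2) :=
    continuous_const.div (by fun_prop) fun ξ => by positivity
  rw [← imCLM_apply, ← ContinuousLinearMap.intervalIntegral_comp_comm _ hint]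
  simp only [imCLM_apply, im_ofReal_div_sub]
  calc |∫ ξ in a..b, f ξ * k.im / ((ξ - k.re) ^ 2 + k.im ^ 2)|
      ≤ ∫ ξ in a..b, |f ξ * k.im / ((ξ - k.re) ^ 2 + k.im ^ 2)| :=
        intervalIntegral.abs_integral_le_integral_abs hab
    _ ≤ ∫ ξ in a..b, M * (|k.im| / ((ξ - k.re) ^ 2 + k.im ^ 2)) := by
        refine intervalIntegral.integral_mono_on hab ?_ ?_ fun ξ hξ => ?_
        · exact ContinuousOn.intervalIntegrable_of_Icc hab <|
            ((hf.mul continuousOn_const).div (by fun_prop) fun ξ _ => by positivity).abs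
        · exact (continuous_const.mul hkernel_cont).intervalIntegrable _ _
        · rw [abs_div, abs_mul, abs_of_pos (by positivity : 0 < (ξ - k.re) ^ 2 + k.im ^ 2),
            mul_div_assoc]
          gcongr
          exact hM ξ hξ
    _ = M * ∫ ξ in a..b, |k.im| / ((ξ - k.re) ^ 2 + k.im ^ 2) :=
        intervalIntegral.integral_const_mul _ _
    _ ≤ M * Real.pi := by gcongr; exact integral_poisson_kernel_le_pi _ _ _ _ hk

noncomputable def cauchyTransform (f : ℝ → ℝ) (a b : ℝ) (k : ℂ) : ℂ :=
  1 / (2 * Real.pi * I) * ∫ ξ in a..b, (f ξ : ℂ) / (ξ - k)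

theorem conj_cauchyTransform_conj (f : ℝ → ℝ) (a b : ℝ) (k : ℂ) :
    conj (cauchyTransform f a b (conj k)) = -cauchyTransform f a b k := by
  have hconst : conj (1 / (2 * (Real.pi : ℂ) * I)) = -(1 / (2 * Real.pi * I)) := by
    simp only [map_div₀, map_one, map_mul, conj_I, conj_ofReal, map_ofNat]
    ring
  have hintegrand : ∀ ξ : ℝ, conj ((f ξ : ℂ) / (ξ - conj k)) = (f ξ : ℂ) / (ξ - k) := by
    intro ξ
    simp only [map_div₀, map_sub, conj_ofReal, conj_conj]
  simp only [cauchyTransform, map_mul, hconst, ← intervalIntegral.intervalIntegral_conj,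
    hintegrand, neg_mul]

theorem re_one_div_two_pi_I_mul (w : ℂ) :
    (1 / (2 * Real.pi * I) * w).re = w.im / (2 * Real.pi) := by
  have h : (1 / (2 * Real.pi * I) : ℂ) = ((1 / (2 * Real.pi) : ℝ) : ℂ) * -I := by
    rw [one_div, mul_inv, inv_I]
    push_cast
    ring
  rw [h, mul_assoc, re_ofReal_mul, neg_mul, neg_re, I_mul_re, neg_neg]
  ring

theorem abs_re_cauchyTransform_le {f : ℝ → ℝ} {a b M : ℝ} (hab : a ≤ b)
    (hf : ContinuousOn f (Set.Icc a b)) (hM : ∀ ξ ∈ Set.Icc a b, |f ξ| ≤ M) (k : ℂ) :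
    |(cauchyTransform f a b k).re| ≤ M / 2 := by
  rw [cauchyTransform, re_one_div_two_pi_I_mul, abs_div, abs_of_pos Real.two_pi_pos,
    div_le_iff₀ Real.two_pi_pos]
  linarith [abs_im_integral_div_sub_le hab hf hM k]

theorem div_sub_add_mem_slitPlane {a : ℝ} (ha : 0 < a) {k : ℂ}
    (hk : k ∉ (fun x : ℝ => (x : ℂ)) '' Set.Icc (-a) a) :
    (k - a) / (k + a) ∈ slitPlane := by
  rw [mem_slitPlane_iff_not_le_zero, nonpos_iff]
  rintro ⟨hre, him⟩
  set r := ((k - a) / (k + a)).re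
  have hden : k + a ≠ 0 := by
    rintro h
    exact hk ⟨-a, ⟨le_rfl, by linarith⟩, by push_cast; linear_combination -h⟩
  have hr : (k - a) / (k + a) = r := ext rfl him
  have hkr : k = ((a * (1 + r) / (1 - r) : ℝ) : ℂ) := by
    rw [div_eq_iff hden] at hr
    have : (1 - r : ℂ) ≠ 0 := by exact_mod_cast (by linarith : (1 - r) ≠ 0)
    push_cast
    field_simp
    linear_combination hr
  refine hk ⟨_, ⟨?_, ?_⟩, hkr.symm⟩
  · rw [le_div_iff₀ (by linarith)]; nlinarith
  · rw [div_le_iff₀ (by linarith)]; nlinarith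

theorem norm_cpow_I_mul_ofReal_le (z : ℂ) (ν : ℝ) :
    ‖z ^ (I * ν)‖ ≤ Real.exp (Real.pi * |ν|) := by
  refine (norm_cpow_le z _).trans ?_
  simp only [mul_re, I_re, ofReal_re, I_im, ofReal_im, zero_mul, mul_zero, sub_zero,
    Real.rpow_zero, mul_im, one_mul, zero_add, one_div, ← Real.exp_neg]
  gcongr
  calc -(z.arg * ν) ≤ |z.arg| * |ν| := by rw [← abs_mul]; exact neg_le_abs _
    _ ≤ Real.pi * |ν| := by gcongr; exact abs_arg_le_pi z

theorem cpow_I_mul_ofReal_mul_conj_cpow_conj {z : ℂ} (hz : z ∈ slitPlane) (ν : ℝ) :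
    z ^ (I * ν) * conj (conj z ^ (I * ν)) = 1 := by
  rw [conj_cpow _ _ (slitPlane_arg_ne_pi hz), conj_conj, map_mul, conj_I, conj_ofReal,
    ← cpow_add _ _ (slitPlane_ne_zero hz)]
  simp

theorem delta_unitarity_and_bound_general
    (k₀ : ℝ) (hk₀ : 0 < k₀) (γ : ℝ → ℂ) (hγ : Continuous γ)
    (ν : ℝ)
    (X : ℂ → ℂ)
    (hX : ∀ k : ℂ, X k = (1/(2*Real.pi*Complex.I)) *
      ∫ ξ in (-k₀)..k₀, ((Real.log ((1 + ‖γ ξ‖^2)/(1 + ‖γ k₀‖^2)) : ℝ) : ℂ) / ((ξ:ℂ) - k))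
    (δ : ℂ → ℂ)
    (hδ : ∀ k : ℂ, δ k = ((k - (k₀:ℂ))/(k + (k₀:ℂ))) ^ (Complex.I * (ν:ℂ)) * Complex.exp (X k)) :
    (∀ k : ℂ, k ∉ (fun x : ℝ => (x:ℂ)) '' Set.Icc (-k₀) k₀ →
      δ k * (starRingEnd ℂ) (δ ((starRingEnd ℂ) k)) = 1) ∧
    ∃ C : ℝ, ∀ k : ℂ, ‖δ k‖ ≤ C := by
  set f : ℝ → ℝ := fun ξ => Real.log ((1 + ‖γ ξ‖ ^ 2) / (1 + ‖γ k₀‖ ^ 2))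
  have hXf : X = cauchyTransform f (-k₀) k₀ := funext hX
  constructor
  · intro k hk
    have hconj : (conj k - k₀) / (conj k + k₀) = conj ((k - k₀) / (k + k₀)) := by
      simp only [map_div₀, map_sub, map_add, conj_ofReal]
    rw [hδ, hδ, hconj, map_mul, ← exp_conj, hXf, conj_cauchyTransform_conj, mul_mul_mul_comm,
      cpow_I_mul_ofReal_mul_conj_cpow_conj (div_sub_add_mem_slitPlane hk₀ hk), ← exp_add,
      add_neg_cancel, exp_zero, one_mul]
  · have hf : Continuous f := by
      refine Continuous.log (by fun_prop) fun ξ => ?_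
      positivity
    obtain ⟨M, hM⟩ := isCompact_Icc.exists_bound_of_continuousOn hf.continuousOn
    refine ⟨Real.exp (Real.pi * |ν|) * Real.exp (M / 2), fun k => ?_⟩
    rw [hδ, norm_mul, norm_exp, hXf]
    gcongr
    · exact norm_cpow_I_mul_ofReal_le _ ν
    · exact (le_abs_self _).trans
        (abs_re_cauchyTransform_le (by linarith) hf.continuousOn hM k)

/-- With δ as in the scalar RH problem, δ(k)·δ*(k*) = 1 off the cut [−k₀,k₀];
in particular |δ| is uniformly bounded on ℂ. -/
theorem delta_unitarity_and_bound
    (k₀ : ℝ) (hk₀ : 0 < k₀) (γ : ℝ → ℂ) (hγ : Continuous γ)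
    (hγsym : ∀ k : ℝ, ‖γ (-k)‖ = ‖γ k‖)
    (ν : ℝ) (hν : ν = -(1/(2*Real.pi)) * Real.log (1 + ‖γ k₀‖^2))
    (X : ℂ → ℂ)
    (hX : ∀ k : ℂ, X k = (1/(2*Real.pi*Complex.I)) *
      ∫ ξ in (-k₀)..k₀, ((Real.log ((1 + ‖γ ξ‖^2)/(1 + ‖γ k₀‖^2)) : ℝ) : ℂ) / ((ξ:ℂ) - k))
    (δ : ℂ → ℂ)
    (hδ : ∀ k : ℂ, δ k = ((k - (k₀:ℂ))/(k + (k₀:ℂ))) ^ (Complex.I * (ν:ℂ)) * Complex.exp (X k)) :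
    (∀ k : ℂ, k ∉ (fun x : ℝ => (x:ℂ)) '' Set.Icc (-k₀) k₀ →
      δ k * (starRingEnd ℂ) (δ ((starRingEnd ℂ) k)) = 1) ∧
    ∃ C : ℝ, ∀ k : ℂ, ‖δ k‖ ≤ C :=
  delta_unitarity_and_bound_general k₀ hk₀ γ hγ ν X hX δ hδ
end

section
/- Let x > 0, t > 0, h > 0 and c > 0, let k₀ = iκ be purely imaginary with x/t = 12κ², and suppose 12k₀² + 12h² = −c; write k = u + i(v+h) with u = v ≥ 0 on the contour Σ₁⁽¹⁾ = {ih + re^{iπ/4}: r ≥ 0}. Then Re(2itθ(k)) ≤ −2cht, where θ(k) = 4k³ + (x/t)k. -/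
open Complex

/-- In the soliton region x > 0, on the shifted contour k = v + (v+h)i with v ≥ 0, the
phase θ(k) = 4k³ + (x/t)k satisfies the uniform exponential decay Re(2itθ(k)) ≤ −2cht. -/
theorem region_two_uniform_decay
    (x t h c : ℝ) (hx : 0 < x) (ht : 0 < t) (hh : 0 < h) (hc : 0 < c)
    (hrel : 12 * h^2 - x/t = -c)
    (θ : ℂ → ℂ) (hθ : ∀ k, θ k = 4 * k^3 + ((x/t : ℝ) : ℂ) * k) :
    ∀ v : ℝ, 0 ≤ v →
      (2 * Complex.I * (t:ℂ) * θ ((v:ℂ) + ((v + h : ℝ) : ℂ) * Complex.I)).re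
        ≤ -2 * c * h * t := by
  intro v hv
  have key : 2 * Complex.I * (t:ℂ) * θ ((v:ℂ) + ((v + h : ℝ) : ℂ) * Complex.I)
      = ((2*t*((v+h)*(4*(v+h)^2 - 12*v^2 - x/t)) : ℝ) : ℂ)
        + ((2*t*(4*(v^3 - 3*v*(v+h)^2) + (x/t)*v) : ℝ) : ℂ) * Complex.I := by
    rw [hθ]; push_cast
    ring_nf
    simp only [Complex.I_sq, Complex.I_pow_four,
      show (Complex.I:ℂ)^3 = -Complex.I by rw [pow_succ, Complex.I_sq]; ring]
    ring
  rw [key]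
  simp only [Complex.add_re, Complex.ofReal_re, Complex.mul_re, Complex.I_re, Complex.I_im,
    Complex.ofReal_im, mul_zero, zero_mul, mul_one, sub_zero, zero_sub, add_zero]
  have ha : x/t = 12*h^2 + c := by linarith
  rw [ha]
  have e1 : 0 ≤ t*(v+h)*(v^2 - v*h + h^2) := by
    apply mul_nonneg (mul_nonneg ht.le (by linarith))
    nlinarith [sq_nonneg (2*v - h)]
  have e2 : 0 ≤ c*t*v := by positivity
  nlinarith [e1, e2]
end
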